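/- arXiv:2006.14155 — 3 statements merged into one kernel-verified Lean document; each statement's English description precedes it below -/
import Mathlib

section
/- Let r, s : I → ℝ be differentiable functions on an interval I with r > 0 everywhere, satisfying the ODE system r' = r·s and s' = 2r⁶ + s² − 1. Then the function (r⁶ − s² + 1)/r² is constant on I. -/
/-!
Along the system, both the numerator `r⁶ - s² + 1` and the denominator `r²` satisfy `u' = 2 s u`,
so their quotient has derivative zero and, by the mean value inequality, is constant on the
interval.
-/

theorem Convex.eq_of_forall_hasDerivWithinAt_zero {𝕜 G : Type*} [RCLike 𝕜] [NormedAddCommGroup G]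
    [NormedSpace 𝕜 G] {f : 𝕜 → G} {S : Set 𝕜} (hS : Convex ℝ S)
    (hf : ∀ x ∈ S, HasDerivWithinAt f 0 S x) {x y : 𝕜} (hx : x ∈ S) (hy : y ∈ S) :
    f x = f y := by
  have h := hS.norm_image_sub_le_of_norm_hasDerivWithin_le hf (C := 0) (fun _ _ => by simp) hy hx
  simpa [sub_eq_zero] using h

theorem hasDerivWithinAt_div_zero_of_same_rate {𝕜 𝕜' : Type*} [NontriviallyNormedField 𝕜]
    [NontriviallyNormedField 𝕜'] [NormedAlgebra 𝕜 𝕜'] {u v : 𝕜 → 𝕜'} {S : Set 𝕜} {x : 𝕜}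
    {a : 𝕜'} (hu : HasDerivWithinAt u (a * u x) S x) (hv : HasDerivWithinAt v (a * v x) S x)
    (hv₀ : v x ≠ 0) :
    HasDerivWithinAt (fun t => u t / v t) 0 S x :=
  (hu.div hv hv₀).congr_deriv (by ring)

/-- If `r, s : I → ℝ` are differentiable on an interval `I` with `r > 0`, satisfying
`r' = r·s` and `s' = 2r⁶ + s² - 1`, then `(r⁶ - s² + 1)/r²` is constant on `I`. -/
theorem first_integral_constant (I : Set ℝ) (hI : Convex ℝ I) (r s : ℝ → ℝ)
    (hr : ∀ x ∈ I, 0 < r x)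
    (hr' : ∀ x ∈ I, HasDerivWithinAt r (r x * s x) I x)
    (hs' : ∀ x ∈ I, HasDerivWithinAt s (2 * r x ^ 6 + s x ^ 2 - 1) I x) :
    ∀ x ∈ I, ∀ y ∈ I,
      (r x ^ 6 - s x ^ 2 + 1) / r x ^ 2 = (r y ^ 6 - s y ^ 2 + 1) / r y ^ 2 := by
  have hnum (x : ℝ) (hx : x ∈ I) : HasDerivWithinAt (fun t => r t ^ 6 - s t ^ 2 + 1)
      (2 * s x * (r x ^ 6 - s x ^ 2 + 1)) I x :=
    ((((hr' x hx).pow 6).sub ((hs' x hx).pow 2)).add_const 1).congr_deriv (by ring)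
  have hden (x : ℝ) (hx : x ∈ I) : HasDerivWithinAt (fun t => r t ^ 2) (2 * s x * r x ^ 2) I x :=
    ((hr' x hx).pow 2).congr_deriv (by ring)
  intro x hx y hy
  exact hI.eq_of_forall_hasDerivWithinAt_zero (f := fun t => (r t ^ 6 - s t ^ 2 + 1) / r t ^ 2)
    (fun z hz => hasDerivWithinAt_div_zero_of_same_rate (hnum z hz) (hden z hz)
      (pow_pos (hr z hz) 2).ne') hx hy
end

section
/- Define u : ℝ³ → ℝ⁶ by u(x,y,z) = (1/√3)(cosh x, sinh x, sinh y, sinh z, cosh y, cosh z), and equip ℝ⁶ with the signature (3,3) quadratic form Q(v) = −v₀² + v₁² + v₂² + v₃² − v₄² − v₅². Then Q(u(x,y,z)) = −1 for all (x,y,z), and the pullback by u of the bilinear form associated to Q is the flat Riemannian metric (1/3)(dx² + dy² + dz²). -/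
noncomputable section

/-- The immersion `u(x,y,z) = (1/√3)(cosh x, sinh x, sinh y, sinh z, cosh y, cosh z)`. -/
def uCliff (x y z : ℝ) : Fin 6 → ℝ :=
  ![Real.cosh x / Real.sqrt 3, Real.sinh x / Real.sqrt 3, Real.sinh y / Real.sqrt 3,
    Real.sinh z / Real.sqrt 3, Real.cosh y / Real.sqrt 3, Real.cosh z / Real.sqrt 3]

/-- The signature (3,3) quadratic form `Q(v) = -v₀² + v₁² + v₂² + v₃² - v₄² - v₅²`. -/
def Q33 (v : Fin 6 → ℝ) : ℝ :=
  -(v 0) ^ 2 + (v 1) ^ 2 + (v 2) ^ 2 + (v 3) ^ 2 - (v 4) ^ 2 - (v 5) ^ 2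

/-- The bilinear form associated to `Q33`. -/
def B33 (v w : Fin 6 → ℝ) : ℝ :=
  -(v 0 * w 0) + v 1 * w 1 + v 2 * w 2 + v 3 * w 3 - v 4 * w 4 - v 5 * w 5

/-- `Q(u(x,y,z)) = -1`, and the pullback of the bilinear form of `Q` along `u` is the flat
metric `(1/3)(dx² + dy² + dz²)`: for any direction `(a,b,c)`, if `w` is the derivative of
`t ↦ u(x+ta, y+tb, z+tc)` at `t = 0`, then `B(w,w) = (1/3)(a² + b² + c²)`. -/
theorem clifford_analogue :
    (∀ x y z : ℝ, Q33 (uCliff x y z) = -1) ∧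
    (∀ x y z a b c : ℝ, ∀ w : Fin 6 → ℝ,
      HasDerivAt (fun t => uCliff (x + t * a) (y + t * b) (z + t * c)) w 0 →
      B33 w w = (1 / 3) * (a ^ 2 + b ^ 2 + c ^ 2)) := by
  have h3 : Real.sqrt 3 ^ 2 = 3 := Real.sq_sqrt (by norm_num)
  have h3ne : Real.sqrt 3 ≠ 0 := by positivity
  constructor
  · intro x y z
    have hx := Real.cosh_sq_sub_sinh_sq x
    have hy := Real.cosh_sq_sub_sinh_sq y
    have hz := Real.cosh_sq_sub_sinh_sq z
    show -(Real.cosh x / Real.sqrt 3) ^ 2 + (Real.sinh x / Real.sqrt 3) ^ 2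
      + (Real.sinh y / Real.sqrt 3) ^ 2 + (Real.sinh z / Real.sqrt 3) ^ 2
      - (Real.cosh y / Real.sqrt 3) ^ 2 - (Real.cosh z / Real.sqrt 3) ^ 2 = -1
    field_simp
    nlinarith [hx, hy, hz, h3]
  · intro x y z a b c w h
    have hx : HasDerivAt (fun t : ℝ => x + t * a) a 0 := by
      simpa using ((hasDerivAt_id (0 : ℝ)).mul_const a).const_add x
    have hy : HasDerivAt (fun t : ℝ => y + t * b) b 0 := by
      simpa using ((hasDerivAt_id (0 : ℝ)).mul_const b).const_add y
    have hz : HasDerivAt (fun t : ℝ => z + t * c) c 0 := by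
      simpa using ((hasDerivAt_id (0 : ℝ)).mul_const c).const_add z
    have comp : ∀ i : Fin 6,
        HasDerivAt (fun t => uCliff (x + t * a) (y + t * b) (z + t * c) i) (w i) 0 := by
      intro i
      have := (hasFDerivAt_pi'.1 h.hasFDerivAt i).hasDerivAt
      simpa using this
    have key : ∀ (p q : ℝ) (hp : HasDerivAt (fun t : ℝ => p + t * q) q 0) (i : Fin 6)
        (hfun : (fun t => uCliff (x + t * a) (y + t * b) (z + t * c) i)
          = (fun t => Real.cosh (p + t * q) / Real.sqrt 3)),
        w i = Real.sinh p * q / Real.sqrt 3 := by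
      intro p q hp i hfun
      have hd : HasDerivAt (fun t => Real.cosh (p + t * q) / Real.sqrt 3)
          (Real.sinh (p + 0 * q) * q / Real.sqrt 3) 0 :=
        ((Real.hasDerivAt_cosh (p + 0 * q)).comp 0 hp).div_const _
      have := (comp i)
      rw [hfun] at this
      have := this.unique hd
      simpa using this
    have keys : ∀ (p q : ℝ) (hp : HasDerivAt (fun t : ℝ => p + t * q) q 0) (i : Fin 6)
        (hfun : (fun t => uCliff (x + t * a) (y + t * b) (z + t * c) i)
          = (fun t => Real.sinh (p + t * q) / Real.sqrt 3)),
        w i = Real.cosh p * q / Real.sqrt 3 := by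
      intro p q hp i hfun
      have hd : HasDerivAt (fun t => Real.sinh (p + t * q) / Real.sqrt 3)
          (Real.cosh (p + 0 * q) * q / Real.sqrt 3) 0 :=
        ((Real.hasDerivAt_sinh (p + 0 * q)).comp 0 hp).div_const _
      have := (comp i)
      rw [hfun] at this
      have := this.unique hd
      simpa using this
    have e0 : w 0 = Real.sinh x * a / Real.sqrt 3 := key x a hx 0 (by funext t; rfl)
    have e1 : w 1 = Real.cosh x * a / Real.sqrt 3 := keys x a hx 1 (by funext t; rfl)
    have e2 : w 2 = Real.cosh y * b / Real.sqrt 3 := keys y b hy 2 (by funext t; rfl)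
    have e3 : w 3 = Real.cosh z * c / Real.sqrt 3 := keys z c hz 3 (by funext t; rfl)
    have e4 : w 4 = Real.sinh y * b / Real.sqrt 3 := key y b hy 4 (by funext t; rfl)
    have e5 : w 5 = Real.sinh z * c / Real.sqrt 3 := key z c hz 5 (by funext t; rfl)
    have hcx := Real.cosh_sq_sub_sinh_sq x
    have hcy := Real.cosh_sq_sub_sinh_sq y
    have hcz := Real.cosh_sq_sub_sinh_sq z
    rw [B33, e0, e1, e2, e3, e4, e5]
    field_simp
    nlinarith [hcx, hcy, hcz, h3]

end
end

section
/- Let k₁ > 0 and k₂ ≠ 0 be constants and let f : I → (0, k₁) be a differentiable function on an interval I. Define g(r) = k₂/√(f(r)(k₁ − f(r))) and v(r) = −2k₁/g(r)², and suppose f satisfies f'(r) = f(r)(f(r) − k₁)/g(r)². Then the triple (f, g, v) satisfies the steady Laplace soliton ODE system: f' = f(g²v + 2f)/(2g²), g' = −(g²v + 4f)/(4g), and v' = v(g²v + 4f)/(2g²). Moreover g²v is identically −2k₁ and g²·f·(f − k₁) is identically −k₂². -/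
/-!
Write `u = f (k₁ - f) > 0`, so that `g = k₂ / √u`. The definitions of `g` and `v` give the two
conserved quantities `g² v = -2k₁` and `g² u = k₂²` pointwise, and substituting `g² v = -2k₁`
turns each equation of the system into a rational identity in `f`, `g`, `k₁` once the
derivatives of `c / √u` and `c / g²` are computed by the chain rule.
-/

section ConstDiv

variable {φ : ℝ → ℝ} {φ' x : ℝ} {s : Set ℝ}

theorem HasDerivWithinAt.const_div_sqrt (c : ℝ) (hφ : HasDerivWithinAt φ φ' s x)
    (hx : 0 < φ x) :
    HasDerivWithinAt (fun y => c / √(φ y)) (-(c / √(φ x)) * φ' / (2 * φ x)) s x := by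
  have hsqrt : 0 < √(φ x) := Real.sqrt_pos.2 hx
  refine ((hasDerivWithinAt_const x s c).fun_div (hφ.sqrt hx.ne') hsqrt.ne').congr_deriv ?_
  rw [Real.sq_sqrt hx.le]
  field_simp
  ring

theorem HasDerivWithinAt.const_div_sq (c : ℝ) (hφ : HasDerivWithinAt φ φ' s x)
    (hx : φ x ≠ 0) :
    HasDerivWithinAt (fun y => c / φ y ^ 2) (-2 * (c / φ x ^ 2) * φ' / φ x) s x := by
  refine ((hasDerivWithinAt_const x s c).fun_div (hφ.fun_pow 2) (pow_ne_zero 2 hx)).congr_deriv ?_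
  field_simp
  ring

end ConstDiv

theorem sq_div_sqrt_mul_eq {k u : ℝ} (hu : 0 < u) : (k / √u) ^ 2 * u = k ^ 2 := by
  rw [div_pow, Real.sq_sqrt hu.le]
  field_simp

theorem soliton_ode_system_general (k₁ k₂ : ℝ) (hk₂ : k₂ ≠ 0)
    (I : Set ℝ) (f g v : ℝ → ℝ)
    (hf : ∀ r ∈ I, 0 < f r ∧ f r < k₁)
    (hg : ∀ r, g r = k₂ / Real.sqrt (f r * (k₁ - f r)))
    (hv : ∀ r, v r = -2 * k₁ / (g r) ^ 2)
    (hf' : ∀ r ∈ I, HasDerivWithinAt f (f r * (f r - k₁) / (g r) ^ 2) I r) :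
    ∀ r ∈ I,
      HasDerivWithinAt f (f r * ((g r) ^ 2 * v r + 2 * f r) / (2 * (g r) ^ 2)) I r ∧
      HasDerivWithinAt g (-(((g r) ^ 2 * v r + 4 * f r) / (4 * g r))) I r ∧
      HasDerivWithinAt v (v r * ((g r) ^ 2 * v r + 4 * f r) / (2 * (g r) ^ 2)) I r ∧
      (g r) ^ 2 * v r = -2 * k₁ ∧
      (g r) ^ 2 * (f r * (f r - k₁)) = -(k₂ ^ 2) := by
  intro r hr
  obtain ⟨hf₀, hf₁⟩ := hf r hr
  have hf₀' : f r ≠ 0 := hf₀.ne'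
  have hk₁f : k₁ - f r ≠ 0 := by linarith
  have hu : 0 < f r * (k₁ - f r) := mul_pos hf₀ (by linarith)
  have hg₀ : g r ≠ 0 := by rw [hg]; exact div_ne_zero hk₂ (Real.sqrt_pos.2 hu).ne'
  have hg2v : g r ^ 2 * v r = -2 * k₁ := by rw [hv]; field_simp
  have hg2f : g r ^ 2 * (f r * (f r - k₁)) = -(k₂ ^ 2) := by
    have h := sq_div_sqrt_mul_eq (k := k₂) hu
    rw [← hg] at h
    linear_combination -h
  have hG : HasDerivWithinAt g (-((-2 * k₁ + 4 * f r) / (4 * g r))) I r := by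
    rw [funext hg]
    refine (((hf' r hr).fun_mul ((hf' r hr).const_sub k₁)).const_div_sqrt k₂ hu).congr_deriv ?_
    beta_reduce
    rw [← hg]
    field_simp
    ring
  have hV : HasDerivWithinAt v (v r * (-2 * k₁ + 4 * f r) / (2 * g r ^ 2)) I r := by
    rw [funext hv]
    refine (hG.const_div_sq (-2 * k₁) hg₀).congr_deriv ?_
    rw [← hv]
    field_simp
    linear_combination (8 * f r - 4 * k₁) * hg2v
  rw [hg2v]
  refine ⟨?_, hG, hV, rfl, hg2f⟩
  convert hf' r hr using 1
  field_simp
  ring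

/-- Let `k₁ > 0`, `k₂ ≠ 0`, and let `f : I → (0, k₁)` be differentiable with
`f' = f(f - k₁)/g²`, where `g = k₂/√(f(k₁ - f))` and `v = -2k₁/g²`.  Then `(f, g, v)`
satisfies the steady Laplace soliton ODE system `f' = f(g²v + 2f)/(2g²)`,
`g' = -(g²v + 4f)/(4g)`, `v' = v(g²v + 4f)/(2g²)`, and moreover `g²v ≡ -2k₁` and
`g²·f·(f - k₁) ≡ -k₂²`. -/
theorem soliton_ode_system (k₁ k₂ : ℝ) (hk₁ : 0 < k₁) (hk₂ : k₂ ≠ 0)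
    (I : Set ℝ) (hI : Convex ℝ I) (f g v : ℝ → ℝ)
    (hf : ∀ r ∈ I, 0 < f r ∧ f r < k₁)
    (hg : ∀ r, g r = k₂ / Real.sqrt (f r * (k₁ - f r)))
    (hv : ∀ r, v r = -2 * k₁ / (g r) ^ 2)
    (hf' : ∀ r ∈ I, HasDerivWithinAt f (f r * (f r - k₁) / (g r) ^ 2) I r) :
    ∀ r ∈ I,
      HasDerivWithinAt f (f r * ((g r) ^ 2 * v r + 2 * f r) / (2 * (g r) ^ 2)) I r ∧
      HasDerivWithinAt g (-(((g r) ^ 2 * v r + 4 * f r) / (4 * g r))) I r ∧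
      HasDerivWithinAt v (v r * ((g r) ^ 2 * v r + 4 * f r) / (2 * (g r) ^ 2)) I r ∧
      (g r) ^ 2 * v r = -2 * k₁ ∧
      (g r) ^ 2 * (f r * (f r - k₁)) = -(k₂ ^ 2) :=
  soliton_ode_system_general k₁ k₂ hk₂ I f g v hf hg hv hf'
end
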